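/- Let F : 2^E → ℝ≥0 be monotone and submodular with F(∅) = 0, let e₁,…,e_a be the greedy-chosen elements in order, and let q₁,…,q_b be additional elements together with an assignment τ from {1,…,b} to {1,…,a} such that each index i ∈ {1,…,a} has at most Δ preimages and, for each j, at the step when e_{τ(j)} was chosen, the marginal gain of e_{τ(j)} was at least that of q_j. Then F({e₁,…,e_a} ∪ {q₁,…,q_b}) ≤ (1 + Δ)·F({e₁,…,e_a}). -/

import Mathlib

/-!
Telescoping along the greedy order writes `F {e₁,…,e_a}` as the sum of the greedy gains `g i`.
By submodularity, adding all the `q j` to the greedy set costs at most the sum of their marginal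
gains with respect to that set, and each such gain is at most the gain of `q j` at step `τ j`,
hence at most `g (τ j)`. Since every greedy step is charged by at most `Δ` of the `q j`, the
extra value is at most `Δ · ∑ g i = Δ · F {e₁,…,e_a}`.
-/

open Finset

section Charging

variable {ι κ R : Type*} [Fintype ι] [Fintype κ] [DecidableEq κ]
  [CommSemiring R] [PartialOrder R] [IsOrderedRing R]

theorem sum_comp_le_mul_sum_of_card_fiber_le (τ : ι → κ) (g : κ → R) (hg : ∀ k, 0 ≤ g k)
    {Δ : ℕ} (hτ : ∀ k, #{i | τ i = k} ≤ Δ) :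
    ∑ i, g (τ i) ≤ Δ * ∑ k, g k := by
  rw [← sum_fiberwise' univ τ g, mul_sum]
  gcongr with k
  rw [sum_const, nsmul_eq_mul]
  exact mul_le_mul_of_nonneg_right (Nat.mono_cast (hτ k)) (hg k)

end Charging

section SetFunction

variable {E ι : Type*} [DecidableEq E] (F : Finset E → ℝ)

theorem sub_le_sum_marginal_of_submodular
    (hFsub : ∀ S T : Finset E, S ⊆ T → ∀ x : E, F (insert x T) - F T ≤ F (insert x S) - F S)
    (A : Finset E) (q : ι → E) (s : Finset ι) :
    F (A ∪ s.image q) - F A ≤ ∑ j ∈ s, (F (insert (q j) A) - F A) := by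
  classical
  induction s using Finset.induction_on with
  | empty => simp
  | insert j s _ ih =>
    have hstep := hFsub A (A ∪ s.image q) subset_union_left (q j)
    rw [image_insert, union_insert, sum_insert ‹_›]
    linarith

def prefixImage {a : ℕ} (e : Fin a → E) (k : ℕ) : Finset E :=
  ({t : Fin a | (t : ℕ) < k} : Finset (Fin a)).image e

theorem prefixImage_zero {a : ℕ} (e : Fin a → E) : prefixImage e 0 = ∅ := by
  simp [prefixImage]

theorem prefixImage_self {a : ℕ} (e : Fin a → E) : prefixImage e a = univ.image e := by
  simp [prefixImage]

theorem prefixImage_succ {a : ℕ} (e : Fin a → E) (i : Fin a) :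
    prefixImage e (i + 1) = insert (e i) (prefixImage e i) := by
  rw [prefixImage, prefixImage, ← image_insert]
  congr 1
  ext t
  simp only [mem_filter, mem_univ, true_and, mem_insert, Fin.ext_iff]
  omega

theorem sub_eq_sum_greedy_gains {a : ℕ} (e : Fin a → E) :
    F (univ.image e) - F ∅ =
      ∑ i : Fin a, (F (insert (e i) (prefixImage e i)) - F (prefixImage e i)) := by
  simp_rw [← prefixImage_succ]
  rw [Fin.sum_univ_eq_sum_range (fun k => F (prefixImage e (k + 1)) - F (prefixImage e k)),
    sum_range_sub (fun k => F (prefixImage e k)), prefixImage_self, prefixImage_zero]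

end SetFunction

theorem stmt_18_general {E : Type} [DecidableEq E]
    (F : Finset E → ℝ) (hF0 : F ∅ = 0)
    (hFmono : ∀ S T : Finset E, S ⊆ T → F S ≤ F T)
    (hFsub : ∀ S T : Finset E, S ⊆ T → ∀ x : E,
      F (insert x T) - F T ≤ F (insert x S) - F S)
    (a b Δ : ℕ) (e : Fin a → E) (q : Fin b → E)
    (τ : Fin b → Fin a)
    (hτ : ∀ i : Fin a, (Finset.univ.filter (fun j : Fin b => τ j = i)).card ≤ Δ)
    (pre : Fin a → Finset E)
    (hpre : ∀ i : Fin a, pre i = (Finset.univ.filter (fun t : Fin a => (t : ℕ) < (i : ℕ))).image e)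
    (hgain : ∀ j : Fin b,
      F (insert (q j) (pre (τ j))) - F (pre (τ j)) ≤
        F (insert (e (τ j)) (pre (τ j))) - F (pre (τ j))) :
    F (Finset.univ.image e ∪ Finset.univ.image q) ≤ (1 + (Δ : ℝ)) * F (Finset.univ.image e) := by
  set G := univ.image e
  set g : Fin a → ℝ := fun i => F (insert (e i) (pre i)) - F (pre i)
  have hg_nonneg : ∀ i, 0 ≤ g i := fun i =>
    sub_nonneg.mpr (hFmono _ _ (subset_insert _ _))
  have hG : F G = ∑ i, g i := by
    simpa [hF0, g, hpre, prefixImage] using sub_eq_sum_greedy_gains F e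
  have hcharge : ∀ j, F (insert (q j) G) - F G ≤ g (τ j) := fun j =>
    have hpreG : pre (τ j) ⊆ G := by rw [hpre]; exact image_subset_image (filter_subset _ _)
    (hFsub _ _ hpreG (q j)).trans (hgain j)
  calc F (G ∪ univ.image q)
      ≤ F G + ∑ j, (F (insert (q j) G) - F G) := by
        linarith [sub_le_sum_marginal_of_submodular F hFsub G q univ]
    _ ≤ F G + ∑ j, g (τ j) := by gcongr with j; exact hcharge j
    _ ≤ F G + Δ * ∑ i, g i := by
        gcongr; exact sum_comp_le_mul_sum_of_card_fiber_le τ g hg_nonneg hτ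
    _ = (1 + Δ) * F G := by rw [← hG]; ring

/-- charging argument with multiplicity — if each extra element `q j` is charged
to a greedy element whose marginal gain at its step dominates that of `q j`, and each greedy
element is charged at most `Δ` times, then the combined set has value at most `(1 + Δ)` times
the greedy value. -/
theorem stmt_18 {E : Type} [DecidableEq E]
    (F : Finset E → ℝ) (hFnn : ∀ S, 0 ≤ F S) (hF0 : F ∅ = 0)
    (hFmono : ∀ S T : Finset E, S ⊆ T → F S ≤ F T)
    (hFsub : ∀ S T : Finset E, S ⊆ T → ∀ x : E,
      F (insert x T) - F T ≤ F (insert x S) - F S)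
    (a b Δ : ℕ) (e : Fin a → E) (q : Fin b → E)
    (hInjE : Function.Injective e)
    (τ : Fin b → Fin a)
    (hτ : ∀ i : Fin a, (Finset.univ.filter (fun j : Fin b => τ j = i)).card ≤ Δ)
    (pre : Fin a → Finset E)
    (hpre : ∀ i : Fin a, pre i = (Finset.univ.filter (fun t : Fin a => (t : ℕ) < (i : ℕ))).image e)
    (hcand : ∀ j : Fin b, q j ∉ pre (τ j))
    (hgain : ∀ j : Fin b,
      F (insert (q j) (pre (τ j))) - F (pre (τ j)) ≤
        F (insert (e (τ j)) (pre (τ j))) - F (pre (τ j))) :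
    F (Finset.univ.image e ∪ Finset.univ.image q) ≤ (1 + (Δ : ℝ)) * F (Finset.univ.image e) :=
  stmt_18_general F hF0 hFmono hFsub a b Δ e q τ hτ pre hpre hgain
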